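/- Let m < n, let τ > 0, let B ∈ ℝ^{m×m} be invertible, let N ∈ ℝ^{m×(n−m)}, and let x* ∈ ℝⁿ whose nonzero components all lie among the first s coordinates, where s ≤ m. Let g ∈ ℝ^m satisfy gᵢ = 1 whenever x*ᵢ > 0, gᵢ = −1 whenever x*ᵢ < 0, and gᵢ ∈ [−1, 1] whenever x*ᵢ = 0 (for i = 1,…,m). Set e = τ B^{−ᵀ} g; assume Nⱼᵀe ≠ 0 for every column Nⱼ of N, choose ξⱼ ∈ [−1, 1] and define the columns of Ñ ∈ ℝ^{m×(n−m)} by Ñⱼ = (ξⱼ τ / |Nⱼᵀe|) Nⱼ. Define A = [B, Ñ] (the m×n matrix whose first m columns form B and last n−m columns form Ñ) and b = A x* + e. Then x* is a global minimizer of f_τ, i.e., f_τ(x*) ≤ f_τ(x) for all x ∈ ℝⁿ. -/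

import Mathlib

open Matrix

/-- The ℓ₁-regularized least-squares objective
`f_τ(x) = τ‖x‖₁ + (1/2)‖Ax − b‖₂²`, for general (finite) index types. -/
noncomputable def fTau {M N : Type*} [Fintype M] [Fintype N] (τ : ℝ)
    (A : Matrix M N ℝ) (b : M → ℝ) (x : N → ℝ) : ℝ :=
  τ * ∑ i, |x i| + (1 / 2) * ∑ j, (A.mulVec x - b) j ^ 2

/-- Correctness of the instance generator IGen2 for `m < n`.  The `n` columns are
indexed by `Fin m ⊕ Fin (n - m)`: the first `m` columns form `B` and the last
`n - m` columns form `Ñ`. -/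
theorem igen2_correct {m n : ℕ} (hmn : m < n) (s : ℕ) (hs : s ≤ m)
    (τ : ℝ) (hτ : 0 < τ)
    (B : Matrix (Fin m) (Fin m) ℝ) (hB : IsUnit B)
    (N : Matrix (Fin m) (Fin (n - m)) ℝ)
    (xstar : Fin m ⊕ Fin (n - m) → ℝ)
    -- all nonzero components of `x*` lie among the first `s` coordinates
    (hsupp₁ : ∀ i : Fin m, s ≤ (i : ℕ) → xstar (Sum.inl i) = 0)
    (hsupp₂ : ∀ j : Fin (n - m), xstar (Sum.inr j) = 0)
    (g : Fin m → ℝ)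
    (hg : ∀ i : Fin m, (0 < xstar (Sum.inl i) → g i = 1) ∧
      (xstar (Sum.inl i) < 0 → g i = -1) ∧
      (xstar (Sum.inl i) = 0 → g i ∈ Set.Icc (-1 : ℝ) 1))
    (e : Fin m → ℝ) (he : e = τ • (Bᵀ)⁻¹.mulVec g)
    (hNe : ∀ j : Fin (n - m), (∑ i, N i j * e i) ≠ 0)
    (ξ : Fin (n - m) → ℝ) (hξ : ∀ j, ξ j ∈ Set.Icc (-1 : ℝ) 1)
    (Ntil : Matrix (Fin m) (Fin (n - m)) ℝ)
    (hNtil : ∀ (i : Fin m) (j : Fin (n - m)),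
      Ntil i j = (ξ j * τ / |∑ k, N k j * e k|) * N i j)
    (A : Matrix (Fin m) (Fin m ⊕ Fin (n - m)) ℝ) (hA : A = Matrix.fromCols B Ntil)
    (b : Fin m → ℝ) (hb : b = A.mulVec xstar + e) :
    ∀ x : Fin m ⊕ Fin (n - m) → ℝ, fTau τ A b xstar ≤ fTau τ A b x := by
  intro x
  subst hA hb
  set S : Fin (n - m) → ℝ := fun j => ∑ k, N k j * e k with hS
  -- the vector c = Aᵀ e
  set c : Fin m ⊕ Fin (n - m) → ℝ :=
    fun k => ∑ i, (Matrix.fromCols B Ntil) i k * e i with hc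
  have hBdet : IsUnit (Bᵀ).det := by
    rw [Matrix.det_transpose]; exact (Matrix.isUnit_iff_isUnit_det B).mp hB
  have hBinv : Bᵀ * (Bᵀ)⁻¹ = 1 := Matrix.mul_nonsing_inv _ hBdet
  have hcl : ∀ i : Fin m, c (Sum.inl i) = τ * g i := by
    intro i
    have h1 : c (Sum.inl i) = (Bᵀ).mulVec e i := by
      simp [hc, Matrix.mulVec, dotProduct, Matrix.transpose_apply, mul_comm]
    rw [h1, he, Matrix.mulVec_smul, Matrix.mulVec_mulVec, hBinv, Matrix.one_mulVec]
    simp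
  have hcr : ∀ j : Fin (n - m), c (Sum.inr j) = (ξ j * τ / |S j|) * S j := by
    intro j
    simp only [hc, Matrix.fromCols_apply_inr]
    rw [hS]
    simp only [hNtil]
    rw [Finset.mul_sum]
    congr 1; ext i; ring
  have hτg : ∀ i : Fin m, |g i| ≤ 1 := by
    intro i
    obtain ⟨h1, h2, h3⟩ := hg i
    rcases lt_trichotomy (xstar (Sum.inl i)) 0 with h | h | h
    · rw [h2 h]; norm_num
    · exact abs_le.mpr (h3 h)
    · rw [h1 h]; norm_num
  have hcb : ∀ k, |c k| ≤ τ := by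
    rintro (i | j)
    · rw [hcl i, abs_mul, abs_of_pos hτ]
      calc τ * |g i| ≤ τ * 1 := by
            exact mul_le_mul_of_nonneg_left (hτg i) hτ.le
        _ = τ := mul_one τ
    · rw [hcr j]
      have hSne : S j ≠ 0 := hNe j
      have : |(ξ j * τ / |S j|) * S j| = |ξ j * τ| := by
        rw [abs_mul, abs_div, abs_abs, div_mul_cancel₀ _ (abs_ne_zero.mpr hSne)]
      rw [this, abs_mul, abs_of_pos hτ]
      calc |ξ j| * τ ≤ 1 * τ := by
            exact mul_le_mul_of_nonneg_right (abs_le.mpr (hξ j)) hτ.le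
        _ = τ := one_mul τ
  have hcx : ∀ k, c k * xstar k = τ * |xstar k| := by
    rintro (i | j)
    · obtain ⟨h1, h2, h3⟩ := hg i
      rcases lt_trichotomy (xstar (Sum.inl i)) 0 with h | h | h
      · rw [hcl i, h2 h, abs_of_neg h]; ring
      · rw [h]; simp
      · rw [hcl i, h1 h, abs_of_pos h]; ring
    · rw [hsupp₂ j]; simp
  -- pointwise subgradient inequality
  have key : ∀ k, 0 ≤ τ * |x k| - τ * |xstar k| - (x k - xstar k) * c k := by
    intro k
    have h1 : x k * c k ≤ τ * |x k| := by
      calc x k * c k ≤ |x k * c k| := le_abs_self _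
        _ = |x k| * |c k| := abs_mul _ _
        _ ≤ |x k| * τ := mul_le_mul_of_nonneg_left (hcb k) (abs_nonneg _)
        _ = τ * |x k| := mul_comm _ _
    have h2 := hcx k
    nlinarith
  -- quadratic expansion
  set d : Fin m ⊕ Fin (n - m) → ℝ := x - xstar with hd
  set A := Matrix.fromCols B Ntil with hA
  have hmv : A.mulVec d = A.mulVec x - A.mulVec xstar := Matrix.mulVec_sub A x xstar
  have h1 : ∀ j, (A.mulVec x - (A.mulVec xstar + e)) j = (A.mulVec d) j - e j := by
    intro j; rw [hmv]; simp; ring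
  have h2 : ∀ j, (A.mulVec xstar - (A.mulVec xstar + e)) j = -e j := by
    intro j; simp
  have hswap : ∑ j, (A.mulVec d) j * e j = ∑ k, d k * c k := by
    simp only [Matrix.mulVec, dotProduct, hc, Finset.sum_mul, Finset.mul_sum]
    rw [Finset.sum_comm]
    congr 1; ext k; congr 1; ext j; ring
  have hsum1 : ∑ j, (A.mulVec x - (A.mulVec xstar + e)) j ^ 2
      = ∑ j, ((A.mulVec d) j ^ 2) - 2 * ∑ k, d k * c k + ∑ j, e j ^ 2 := by
    rw [← hswap]
    simp only [h1]
    have hpt : ∀ j, ((A.mulVec d) j - e j) ^ 2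
        = (A.mulVec d) j ^ 2 - 2 * ((A.mulVec d) j * e j) + e j ^ 2 := fun j => by ring
    rw [Finset.mul_sum]
    simp_rw [hpt]
    rw [Finset.sum_add_distrib, Finset.sum_sub_distrib]
  have hsum2 : ∑ j, (A.mulVec xstar - (A.mulVec xstar + e)) j ^ 2 = ∑ j, e j ^ 2 := by
    congr 1; ext j; rw [h2]; ring
  have hAd2 : 0 ≤ ∑ j, (A.mulVec d) j ^ 2 :=
    Finset.sum_nonneg fun j _ => sq_nonneg _
  have hkey : 0 ≤ τ * ∑ k, |x k| - τ * ∑ k, |xstar k| - ∑ k, d k * c k := by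
    have := Finset.sum_nonneg fun k (_ : k ∈ Finset.univ) => key k
    have heq : ∑ k, (τ * |x k| - τ * |xstar k| - (x k - xstar k) * c k)
        = τ * ∑ k, |x k| - τ * ∑ k, |xstar k| - ∑ k, d k * c k := by
      rw [Finset.mul_sum, Finset.mul_sum, ← Finset.sum_sub_distrib,
        ← Finset.sum_sub_distrib]
      exact Finset.sum_congr rfl fun k _ => by simp [hd]
    linarith [heq ▸ this]
  unfold fTau
  rw [hsum1, hsum2]
  linarith
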